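/- Let A = ℤ[X,h]/(X² − Xh). Let C be the cochain complex of A-modules concentrated in homological degrees 0 and 1 with C⁰ = A ⊕ A ⊕ A and C¹ = A ⊕ A ⊕ A, whose differential is the A-linear map given, with respect to the standard bases (columns indexing the source summands, rows the target summands), by the matrix [[0, 1, X], [X−h, 2X−h, 0], [1, 0, 2X−h]]. Then C is chain homotopy equivalent (as a complex of A-modules) to the cochain complex D with D⁰ = A and D¹ = A, concentrated in degrees 0 and 1, whose differential is multiplication by h². -/

import Mathlib

open CategoryTheory MvPolynomial

/-- The Bar-Natan ring `A = ℤ[X,h]/(X² - Xh)`. -/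
abbrev BNRing : Type :=
  MvPolynomial (Fin 2) ℤ ⧸
    Ideal.span {(X 0 : MvPolynomial (Fin 2) ℤ) ^ 2 - X 0 * X 1}

/-- The class of the variable `X` in `A`. -/
noncomputable def BNX : BNRing :=
  Ideal.Quotient.mk _ (X 0)

/-- The class of the variable `h` in `A`. -/
noncomputable def BNh : BNRing :=
  Ideal.Quotient.mk _ (X 1)

/-- The zero module, used outside homological degrees `0` and `1`. -/
noncomputable def zeroMod : ModuleCat BNRing := ModuleCat.of BNRing PUnit

/-- Degree-wise objects of a cochain complex concentrated in degrees `0`, `1`. -/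
noncomputable def ttX (M N : ModuleCat BNRing) : ℤ → ModuleCat BNRing :=
  fun k => if k = 0 then M else if k = 1 then N else zeroMod

/-- The cochain complex of `A`-modules concentrated in homological degrees `0`
and `1`, with the map `f : M ⟶ N` as its only (possibly) nonzero
differential. -/
noncomputable def twoTerm (M N : ModuleCat BNRing) (f : M ⟶ N) :
    CochainComplex (ModuleCat BNRing) ℤ where
  X := ttX M N
  d i j :=
    if h : i = 0 ∧ j = 1 then
      eqToHom (show ttX M N i = M by rw [h.1]; rfl) ≫ f ≫
        eqToHom (show N = ttX M N j by rw [h.2]; rfl)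
    else 0
  shape i j hij := by
    try dsimp only
    rw [dif_neg]
    rintro ⟨rfl, rfl⟩
    exact hij (by simp)
  d_comp_d' i j k hij hjk := by
    try dsimp only
    by_cases h : i = 0 ∧ j = 1
    · rw [dif_neg (show ¬(j = 0 ∧ k = 1) by omega), Limits.comp_zero]
    · rw [dif_neg h, Limits.zero_comp]

/-- Projection on the first coordinate. -/
noncomputable def pr1 : (BNRing × BNRing × BNRing) →ₗ[BNRing] BNRing :=
  LinearMap.fst _ _ _

/-- Projection on the second coordinate. -/
noncomputable def pr2 : (BNRing × BNRing × BNRing) →ₗ[BNRing] BNRing :=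
  (LinearMap.fst BNRing BNRing BNRing).comp
    (LinearMap.snd BNRing BNRing (BNRing × BNRing))

/-- Projection on the third coordinate. -/
noncomputable def pr3 : (BNRing × BNRing × BNRing) →ₗ[BNRing] BNRing :=
  (LinearMap.snd BNRing BNRing BNRing).comp
    (LinearMap.snd BNRing BNRing (BNRing × BNRing))

/-- The `A`-linear map `A³ → A³` given by the matrix
`[[0, 1, X], [X−h, 2X−h, 0], [1, 0, 2X−h]]` (columns indexing the source
summands, rows the target summands). -/
noncomputable def dMatrix :
    (BNRing × BNRing × BNRing) →ₗ[BNRing] (BNRing × BNRing × BNRing) :=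
  LinearMap.prod (pr2 + BNX • pr3)
    (LinearMap.prod ((BNX - BNh) • pr1 + (2 * BNX - BNh) • pr2)
      (pr1 + (2 * BNX - BNh) • pr3))

/-!
Gaussian elimination on the two unit entries of the matrix, in positions `(1,2)` and `(3,1)`,
leaves `A → A` with differential the Schur complement `0 - (2X-h)·X - (X-h)(2X-h)`, which is
`-h²` because `X² = Xh`. The elimination provides chain maps `elimProj` and `elimIncl` with
`elimProj ∘ elimIncl = id` on the nose and `elimIncl ∘ elimProj` homotopic to the identity via
`elimHomotopy`; the sign of the Schur complement is absorbed into `elimProj₀`.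
-/

section TwoTerm

variable {M N P Q : ModuleCat BNRing}

lemma subsingleton_ttX (M N : ModuleCat BNRing) {k : ℤ} (h0 : k ≠ 0) (h1 : k ≠ 1) :
    Subsingleton (ttX M N k) := by
  simp only [ttX, h0, h1, if_false]
  exact inferInstanceAs (Subsingleton PUnit)

lemma ttX_hom_ext {X : ModuleCat BNRing} {k : ℤ} (h0 : k ≠ 0) (h1 : k ≠ 1)
    (u v : X ⟶ ttX M N k) : u = v :=
  have := subsingleton_ttX M N h0 h1
  ModuleCat.hom_ext (LinearMap.ext fun _ => Subsingleton.elim _ _)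

lemma twoTerm_d_zero_one (f : M ⟶ N) : (twoTerm M N f).d 0 1 = f := by
  show 𝟙 M ≫ f ≫ 𝟙 N = f
  simp

lemma twoTerm_d_of_ne (f : M ⟶ N) {i j : ℤ} (h : ¬(i = 0 ∧ j = 1)) :
    (twoTerm M N f).d i j = 0 :=
  dif_neg h

noncomputable def ttHom (f : M ⟶ N) (g : P ⟶ Q) (a : M ⟶ P) (b : N ⟶ Q) (k : ℤ) :
    (twoTerm M N f).X k ⟶ (twoTerm P Q g).X k :=
  if h0 : k = 0 then
    eqToHom (by rw [h0]; rfl) ≫ a ≫ eqToHom (by rw [h0]; rfl)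
  else if h1 : k = 1 then
    eqToHom (by rw [h1]; rfl) ≫ b ≫ eqToHom (by rw [h1]; rfl)
  else 0

lemma ttHom_zero (f : M ⟶ N) (g : P ⟶ Q) (a : M ⟶ P) (b : N ⟶ Q) : ttHom f g a b 0 = a := by
  show 𝟙 M ≫ a ≫ 𝟙 P = a
  simp

lemma ttHom_one (f : M ⟶ N) (g : P ⟶ Q) (a : M ⟶ P) (b : N ⟶ Q) : ttHom f g a b 1 = b := by
  show 𝟙 N ≫ b ≫ 𝟙 Q = b
  simp

noncomputable def twoTermMap (f : M ⟶ N) (g : P ⟶ Q) (a : M ⟶ P) (b : N ⟶ Q)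
    (comm : a ≫ g = f ≫ b) : twoTerm M N f ⟶ twoTerm P Q g where
  f := ttHom f g a b
  comm' i j _ := by
    by_cases h : i = 0 ∧ j = 1
    · obtain ⟨rfl, rfl⟩ := h
      rw [ttHom_zero, ttHom_one, twoTerm_d_zero_one, twoTerm_d_zero_one]
      exact comm
    · rw [twoTerm_d_of_ne f h, twoTerm_d_of_ne g h, Limits.comp_zero, Limits.zero_comp]

lemma twoTermMap_ext {f : M ⟶ N} {g : P ⟶ Q} {α β : twoTerm M N f ⟶ twoTerm P Q g}
    (h0 : α.f 0 = β.f 0) (h1 : α.f 1 = β.f 1) : α = β := by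
  ext1 k
  by_cases hk0 : k = 0
  · exact hk0 ▸ h0
  by_cases hk1 : k = 1
  · exact hk1 ▸ h1
  exact ttX_hom_ext hk0 hk1 _ _

lemma twoTermMap_f (f : M ⟶ N) (g : P ⟶ Q) (a : M ⟶ P) (b : N ⟶ Q) (comm : a ≫ g = f ≫ b)
    (k : ℤ) : (twoTermMap f g a b comm).f k = ttHom f g a b k :=
  rfl

lemma twoTermMap_id (f : M ⟶ N) :
    twoTermMap f f (𝟙 M) (𝟙 N) (by simp) = 𝟙 (twoTerm M N f) :=
  twoTermMap_ext (ttHom_zero f f (𝟙 M) (𝟙 N)) (ttHom_one f f (𝟙 M) (𝟙 N))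

lemma twoTermMap_comp {R S : ModuleCat BNRing} {f : M ⟶ N} {g : P ⟶ Q} {e : R ⟶ S}
    {a : M ⟶ P} {b : N ⟶ Q} {c : P ⟶ R} {d : Q ⟶ S}
    (comm : a ≫ g = f ≫ b) (comm' : c ≫ e = g ≫ d) :
    twoTermMap f g a b comm ≫ twoTermMap g e c d comm' =
      twoTermMap f e (a ≫ c) (b ≫ d)
        (by simp only [Category.assoc, comm', reassoc_of% comm]) :=
  twoTermMap_ext (by simp only [HomologicalComplex.comp_f, twoTermMap_f, ttHom_zero]; rfl)
    (by simp only [HomologicalComplex.comp_f, twoTermMap_f, ttHom_one]; rfl)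

noncomputable def ttHomotopyHom (f : M ⟶ N) (g : P ⟶ Q) (K : N ⟶ P) (i j : ℤ) :
    (twoTerm M N f).X i ⟶ (twoTerm P Q g).X j :=
  if h : i = 1 ∧ j = 0 then
    eqToHom (by rw [h.1]; rfl) ≫ K ≫ eqToHom (by rw [h.2]; rfl)
  else 0

lemma ttHomotopyHom_one_zero (f : M ⟶ N) (g : P ⟶ Q) (K : N ⟶ P) :
    ttHomotopyHom f g K 1 0 = K := by
  show 𝟙 N ≫ K ≫ 𝟙 P = K
  simp

lemma ttHomotopyHom_of_ne (f : M ⟶ N) (g : P ⟶ Q) (K : N ⟶ P) {i j : ℤ}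
    (h : ¬(i = 1 ∧ j = 0)) :
    ttHomotopyHom f g K i j = 0 :=
  dif_neg h

noncomputable def twoTermHomotopy {f : M ⟶ N} {g : P ⟶ Q}
    {a a' : M ⟶ P} {b b' : N ⟶ Q} (comm : a ≫ g = f ≫ b) (comm' : a' ≫ g = f ≫ b')
    (K : N ⟶ P) (h0 : a = f ≫ K + a') (h1 : b = K ≫ g + b') :
    Homotopy (twoTermMap f g a b comm) (twoTermMap f g a' b' comm') where
  hom := ttHomotopyHom f g K
  zero i j hij := ttHomotopyHom_of_ne f g K fun ⟨hi, hj⟩ => hij (by simp [hi, hj])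
  comm i := by
    by_cases hi0 : i = 0
    · subst hi0
      rw [dNext_eq _ (show (ComplexShape.up ℤ).Rel 0 1 from rfl),
        prevD_eq _ (show (ComplexShape.up ℤ).Rel (-1) 0 from rfl), twoTermMap_f, twoTermMap_f,
        ttHom_zero, ttHom_zero, ttHomotopyHom_one_zero, ttHomotopyHom_of_ne f g K (by omega),
        twoTerm_d_zero_one, Limits.zero_comp, add_zero]
      exact h0
    by_cases hi1 : i = 1
    · subst hi1
      rw [dNext_eq _ (show (ComplexShape.up ℤ).Rel 1 2 from rfl),
        prevD_eq _ (show (ComplexShape.up ℤ).Rel 0 1 from rfl), twoTermMap_f, twoTermMap_f,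
        ttHom_one, ttHom_one, ttHomotopyHom_one_zero, ttHomotopyHom_of_ne f g K (by omega),
        twoTerm_d_zero_one, Limits.comp_zero, zero_add]
      exact h1
    exact ttX_hom_ext hi0 hi1 _ _

noncomputable def twoTermHomotopyEquiv (f : M ⟶ N) (g : P ⟶ Q)
    (a : M ⟶ P) (b : N ⟶ Q) (comm : a ≫ g = f ≫ b)
    (a' : P ⟶ M) (b' : Q ⟶ N) (comm' : a' ≫ f = g ≫ b')
    (K : N ⟶ M) (hK₀ : a ≫ a' = f ≫ K + 𝟙 M) (hK₁ : b ≫ b' = K ≫ f + 𝟙 N)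
    (L : Q ⟶ P) (hL₀ : a' ≫ a = g ≫ L + 𝟙 P) (hL₁ : b' ≫ b = L ≫ g + 𝟙 Q) :
    HomotopyEquiv (twoTerm M N f) (twoTerm P Q g) where
  hom := twoTermMap f g a b comm
  inv := twoTermMap g f a' b' comm'
  homotopyHomInvId := by
    rw [twoTermMap_comp, ← twoTermMap_id]
    exact twoTermHomotopy _ _ K hK₀ hK₁
  homotopyInvHomId := by
    rw [twoTermMap_comp, ← twoTermMap_id]
    exact twoTermHomotopy _ _ L hL₀ hL₁

end TwoTerm

lemma BNX_mul_BNX : BNX * BNX = BNX * BNh := by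
  rw [BNX, BNh, ← map_mul, ← map_mul, Ideal.Quotient.eq]
  exact Ideal.subset_span (by simp [sq])

lemma dMatrix_apply (w : BNRing × BNRing × BNRing) :
    dMatrix w = (w.2.1 + BNX * w.2.2, (BNX - BNh) * w.1 + (2 * BNX - BNh) * w.2.1,
      w.1 + (2 * BNX - BNh) * w.2.2) :=
  rfl

noncomputable def elimProj₀ : (BNRing × BNRing × BNRing) →ₗ[BNRing] BNRing := -pr3

noncomputable def elimProj₁ : (BNRing × BNRing × BNRing) →ₗ[BNRing] BNRing :=
  (BNh - 2 * BNX) • pr1 + pr2 + (BNh - BNX) • pr3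

noncomputable def elimIncl₀ : BNRing →ₗ[BNRing] BNRing × BNRing × BNRing :=
  LinearMap.prod ((2 * BNX - BNh) • LinearMap.id)
    (LinearMap.prod (BNX • LinearMap.id) (-LinearMap.id))

noncomputable def elimIncl₁ : BNRing →ₗ[BNRing] BNRing × BNRing × BNRing :=
  LinearMap.prod 0 (LinearMap.prod LinearMap.id 0)

noncomputable def elimHomotopy :
    (BNRing × BNRing × BNRing) →ₗ[BNRing] BNRing × BNRing × BNRing :=
  LinearMap.prod (-pr3) (LinearMap.prod (-pr1) 0)

lemma elimProj₀_apply (w : BNRing × BNRing × BNRing) : elimProj₀ w = -w.2.2 :=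
  rfl

lemma elimProj₁_apply (w : BNRing × BNRing × BNRing) :
    elimProj₁ w = (BNh - 2 * BNX) * w.1 + w.2.1 + (BNh - BNX) * w.2.2 :=
  rfl

lemma elimIncl₀_apply (r : BNRing) : elimIncl₀ r = ((2 * BNX - BNh) * r, BNX * r, -r) :=
  rfl

lemma elimIncl₁_apply (r : BNRing) : elimIncl₁ r = (0, r, 0) :=
  rfl

lemma elimHomotopy_apply (w : BNRing × BNRing × BNRing) :
    elimHomotopy w = (-w.2.2, -w.1, 0) :=
  rfl

lemma mulLeft_comp_elimProj₀ :
    LinearMap.mulLeft BNRing (BNh ^ 2) ∘ₗ elimProj₀ = elimProj₁ ∘ₗ dMatrix := by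
  refine LinearMap.ext fun w => ?_
  simp only [LinearMap.comp_apply, LinearMap.mulLeft_apply, elimProj₀_apply, elimProj₁_apply,
    dMatrix_apply]
  linear_combination (4 * w.2.2) * BNX_mul_BNX

lemma dMatrix_comp_elimIncl₀ :
    dMatrix ∘ₗ elimIncl₀ = elimIncl₁ ∘ₗ LinearMap.mulLeft BNRing (BNh ^ 2) := by
  refine LinearMap.ext fun r => ?_
  simp only [LinearMap.comp_apply, LinearMap.mulLeft_apply, elimIncl₀_apply, elimIncl₁_apply,
    dMatrix_apply, Prod.mk.injEq]
  exact ⟨by ring, by linear_combination (4 * r) * BNX_mul_BNX, by ring⟩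

lemma elimIncl₀_comp_elimProj₀ :
    elimIncl₀ ∘ₗ elimProj₀ = elimHomotopy ∘ₗ dMatrix + LinearMap.id := by
  refine LinearMap.ext fun w => ?_
  simp only [LinearMap.add_apply, LinearMap.comp_apply, LinearMap.id_apply, elimIncl₀_apply,
    elimProj₀_apply, elimHomotopy_apply, dMatrix_apply, Prod.ext_iff, Prod.fst_add, Prod.snd_add]
  exact ⟨by ring, by ring, by ring⟩

lemma elimIncl₁_comp_elimProj₁ :
    elimIncl₁ ∘ₗ elimProj₁ = dMatrix ∘ₗ elimHomotopy + LinearMap.id := by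
  refine LinearMap.ext fun w => ?_
  simp only [LinearMap.add_apply, LinearMap.comp_apply, LinearMap.id_apply, elimIncl₁_apply,
    elimProj₁_apply, elimHomotopy_apply, dMatrix_apply, Prod.ext_iff, Prod.fst_add, Prod.snd_add]
  exact ⟨by ring, by ring, by ring⟩

lemma elimProj₀_comp_elimIncl₀ : elimProj₀ ∘ₗ elimIncl₀ = LinearMap.id :=
  LinearMap.ext fun r => by simp [elimProj₀_apply, elimIncl₀_apply]

lemma elimProj₁_comp_elimIncl₁ : elimProj₁ ∘ₗ elimIncl₁ = LinearMap.id :=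
  LinearMap.ext fun r => by simp [elimProj₁_apply, elimIncl₁_apply]

theorem matrix_complex_homotopyEquiv_A2 :
    Nonempty (HomotopyEquiv
      (twoTerm (ModuleCat.of BNRing (BNRing × BNRing × BNRing))
        (ModuleCat.of BNRing (BNRing × BNRing × BNRing))
        (ModuleCat.ofHom dMatrix))
      (twoTerm (ModuleCat.of BNRing BNRing) (ModuleCat.of BNRing BNRing)
        (ModuleCat.ofHom (LinearMap.mulLeft BNRing (BNh ^ 2))))) := by
  refine ⟨twoTermHomotopyEquiv _ _
    (ModuleCat.ofHom elimProj₀) (ModuleCat.ofHom elimProj₁)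
    (ModuleCat.hom_ext mulLeft_comp_elimProj₀)
    (ModuleCat.ofHom elimIncl₀) (ModuleCat.ofHom elimIncl₁)
    (ModuleCat.hom_ext dMatrix_comp_elimIncl₀)
    (ModuleCat.ofHom elimHomotopy)
    (ModuleCat.hom_ext elimIncl₀_comp_elimProj₀) (ModuleCat.hom_ext elimIncl₁_comp_elimProj₁)
    0 ?_ ?_⟩
  all_goals simp only [Limits.comp_zero, Limits.zero_comp, zero_add]
  · exact ModuleCat.hom_ext elimProj₀_comp_elimIncl₀
  · exact ModuleCat.hom_ext elimProj₁_comp_elimIncl₁
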